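/- Equip ℤ³ with the Mukai pairing for d = 2, i.e., ⟨(r,c,a),(r',c',a')⟩ = 4·c·c' − r·a' − r'·a, and set v := (2,0,−2). Then there is no class s ∈ ℤ³ with ⟨s,s⟩ = −2 and ⟨s,v⟩ = 2, while the class s = (3,−1,1) satisfies ⟨s,s⟩ = −2 and ⟨s,v⟩ = 4. -/

import Mathlib

/-- The Mukai pairing on the algebraic Mukai lattice `ℤ³` of a K3 surface with
`Pic(X) = ℤ·H`, `H² = 2d`: `⟨(r,c,a),(r',c',a')⟩ = 2d·c·c' − r·a' − r'·a`. -/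
def mukai (d : ℤ) (u w : ℤ × ℤ × ℤ) : ℤ :=
  2 * d * u.2.1 * w.2.1 - u.1 * w.2.2 - w.1 * u.2.2

/-!
Pairing `s = (r, c, a)` with `v = (2, 0, -2)` gives `2(r - a)`, so `⟨s, v⟩ = 2` forces `r = a + 1`.
Then `⟨s, s⟩ = 2(d c² - a(a + 1))`, and for even `d` the bracket is even because `a(a + 1)` is.
Hence `⟨s, s⟩ ≡ 0 mod 4` and cannot equal `-2`.
-/

lemma mukai_self (d : ℤ) (s : ℤ × ℤ × ℤ) :
    mukai d s s = 2 * (d * s.2.1 ^ 2 - s.1 * s.2.2) := by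
  unfold mukai; ring

lemma mukai_two_zero_neg_two (d : ℤ) (s : ℤ × ℤ × ℤ) :
    mukai d s (2, 0, -2) = 2 * (s.1 - s.2.2) := by
  unfold mukai; ring

lemma four_dvd_mukai_self_of_mukai_two_zero_neg_two_eq_two {d : ℤ} (hd : Even d)
    {s : ℤ × ℤ × ℤ} (hs : mukai d s (2, 0, -2) = 2) : 4 ∣ mukai d s s := by
  obtain ⟨r, c, a⟩ := s
  have hr : r = a + 1 := by rw [mukai_two_zero_neg_two] at hs; dsimp only at hs; omega
  subst hr
  have h_even : Even (d * c ^ 2 - (a + 1) * a) :=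
    (hd.mul_right _).sub (mul_comm a (a + 1) ▸ Int.even_mul_succ_self a)
  obtain ⟨k, hk⟩ := h_even
  rw [mukai_self]
  exact ⟨k, by simp only [hk]; ring⟩

/-- For `d = 2` and `v = (2,0,−2)`: there is no spherical class `s` with
`⟨s,v⟩ = 2`, while `s = (3,−1,1)` is spherical with `⟨s,v⟩ = 4`. -/
theorem stmt17 :
    (¬ ∃ s : ℤ × ℤ × ℤ, mukai 2 s s = -2 ∧ mukai 2 s (2, 0, -2) = 2) ∧
    (mukai 2 (3, -1, 1) (3, -1, 1) = -2 ∧ mukai 2 (3, -1, 1) (2, 0, -2) = 4) := by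
  refine ⟨?_, by decide, by decide⟩
  rintro ⟨s, hss, hsv⟩
  have h4 := four_dvd_mukai_self_of_mukai_two_zero_neg_two_eq_two even_two hsv
  rw [hss] at h4
  norm_num at h4
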